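/- arXiv:2211.10798 — 3 statements merged into one kernel-verified Lean document; each statement's English description precedes it below -/
import Mathlib

section
/- Let f : ℝⁿ → ℝ ∪ {∞} be proper convex lower semicontinuous, let g : ℝⁿ → ℝ be differentiable with ∇g Lipschitz continuous on the domain of f with constant λ ≥ 0, and let h = f + g. If 0 < ν ≤ λ⁻¹, then for all ξ, ξ′ ∈ ℝⁿ with ξ′ in the domain of f: h(prox_{νf}(ξ)) − h(ξ′) ≤ −(2ν)⁻¹ |prox_{νf}(ξ) − ξ′|² − ν⁻¹ ⟨prox_{νf}(ξ) − ξ′, ξ′ − ν∇g(ξ′) − ξ⟩. -/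
/-!
Write `p = prox_{νf}(ξ)`. Both `f p` and `f ξ'` are finite, so `f` may be replaced by the real
convex function `(f ·).toReal` on its domain. Comparing `p` with the points `p + t (ξ' - p)` of the
domain and letting `t → 0⁺` gives the optimality condition `f p ≤ f ξ' - ν⁻¹ ⟪ξ - p, ξ' - p⟫`.
The descent lemma `g p ≤ g ξ' + ⟪∇g ξ', p - ξ'⟫ + (λ / 2) ‖p - ξ'‖²` follows by comparing
`t ↦ g (ξ' + t (p - ξ'))` with its quadratic upper model on `[0, 1]`. Adding the two and using
`λ / 2 ≤ (2ν)⁻¹` gives the claim.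
-/

open Set Filter Topology
open scoped RealInnerProductSpace NNReal

theorem convexOn_toReal_setOf_ne_top {E : Type*} [AddCommMonoid E] [Module ℝ E] {f : E → EReal}
    (hconv : ∀ x y : E, ∀ a b : ℝ, 0 ≤ a → 0 ≤ b → a + b = 1 →
      f (a • x + b • y) ≤ (a : EReal) * f x + (b : EReal) * f y)
    (hbot : ∀ x, f x ≠ ⊥) :
    ConvexOn ℝ {x | f x ≠ ⊤} fun x ↦ (f x).toReal := by
  have hle : ∀ x, f x ≠ ⊤ → ∀ y, f y ≠ ⊤ → ∀ a b : ℝ, 0 ≤ a → 0 ≤ b → a + b = 1 →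
      f (a • x + b • y) ≤ ((a * (f x).toReal + b * (f y).toReal : ℝ) : EReal) := by
    intro x hx y hy a b ha hb hab
    calc f (a • x + b • y) ≤ (a : EReal) * f x + (b : EReal) * f y := hconv x y a b ha hb hab
      _ = _ := by
        rw [EReal.coe_add, EReal.coe_mul, EReal.coe_mul, EReal.coe_toReal hx (hbot x),
          EReal.coe_toReal hy (hbot y)]
  refine ⟨fun x hx y hy a b ha hb hab ↦ ne_top_of_le_ne_top (EReal.coe_ne_top _)
    (hle x hx y hy a b ha hb hab), fun x hx y hy a b ha hb hab ↦ ?_⟩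
  exact (EReal.toReal_le_toReal (hle x hx y hy a b ha hb hab) (hbot _)
    (EReal.coe_ne_top _)).trans_eq (EReal.toReal_coe _)

section

variable {E : Type*} [NormedAddCommGroup E] [InnerProductSpace ℝ E]

theorem ConvexOn.le_sub_inner_of_isMinOn {s : Set E} {F : E → ℝ} (hF : ConvexOn ℝ s F) {c : ℝ}
    {ξ p y : E} (hmin : IsMinOn (fun y ↦ F y + c * ‖ξ - y‖ ^ 2) s p) (hp : p ∈ s) (hy : y ∈ s) :
    F p ≤ F y - 2 * c * ⟪ξ - p, y - p⟫ := by
  set M := c * ‖y - p‖ ^ 2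
  have hstep : ∀ t ∈ Ioc (0 : ℝ) 1, F p ≤ F y - 2 * c * ⟪ξ - p, y - p⟫ + t * M := by
    rintro t ⟨ht0, ht1⟩
    have hconv : F (p + t • (y - p)) ≤ (1 - t) * F p + t * F y := by
      have := hF.2 hp hy (sub_nonneg.2 ht1) ht0.le (by ring)
      rwa [show (1 - t) • p + t • y = p + t • (y - p) by module] at this
    have hnorm : ‖ξ - (p + t • (y - p))‖ ^ 2
        = ‖ξ - p‖ ^ 2 - 2 * t * ⟪ξ - p, y - p⟫ + t ^ 2 * ‖y - p‖ ^ 2 := by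
      rw [sub_add_eq_sub_sub, norm_sub_sq_real, inner_smul_right, norm_smul,
        Real.norm_of_nonneg ht0.le]
      ring
    have hmin' : F p + c * ‖ξ - p‖ ^ 2 ≤ F (p + t • (y - p)) + c * ‖ξ - (p + t • (y - p))‖ ^ 2 :=
      hmin (hF.1.add_smul_sub_mem hp hy ⟨ht0.le, ht1⟩)
    refine le_of_mul_le_mul_left ?_ ht0
    linear_combination hmin' + hconv + c * hnorm
  have hlim : Tendsto (fun t ↦ F y - 2 * c * ⟪ξ - p, y - p⟫ + t * M) (𝓝[>] 0)
      (𝓝 (F y - 2 * c * ⟪ξ - p, y - p⟫)) := by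
    have hcont : Continuous fun t ↦ F y - 2 * c * ⟪ξ - p, y - p⟫ + t * M := by fun_prop
    simpa using (hcont.tendsto 0).mono_left nhdsWithin_le_nhds
  exact ge_of_tendsto hlim (eventually_of_mem (Ioc_mem_nhdsGT one_pos) hstep)

variable [CompleteSpace E]

theorem HasGradientAt.hasDerivAt_comp_add_smul {g : E → ℝ} {g' x v : E} {t : ℝ}
    (h : HasGradientAt g g' (x + t • v)) :
    HasDerivAt (fun t : ℝ ↦ g (x + t • v)) ⟪g', v⟫ t := by
  have hline : HasDerivAt (fun t : ℝ ↦ x + t • v) v t := by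
    simpa using ((hasDerivAt_id t).smul_const v).const_add x
  simpa [Function.comp_def] using h.hasFDerivAt.comp_hasDerivAt t hline

theorem Convex.le_add_inner_gradient_add_of_lipschitzOnWith {s : Set E} (hs : Convex ℝ s)
    {g : E → ℝ} (hg : ∀ x ∈ s, DifferentiableAt ℝ g x) {K : ℝ≥0}
    (hLip : LipschitzOnWith K (gradient g) s) {x y : E} (hx : x ∈ s) (hy : y ∈ s) :
    g y ≤ g x + ⟪gradient g x, y - x⟫ + K / 2 * ‖y - x‖ ^ 2 := by
  set v := y - x
  have hderiv : ∀ t ∈ Icc (0 : ℝ) 1,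
      HasDerivAt (fun t : ℝ ↦ g (x + t • v)) ⟪gradient g (x + t • v), v⟫ t := fun t ht ↦
    (hg _ (hs.add_smul_sub_mem hx hy ht)).hasGradientAt.hasDerivAt_comp_add_smul
  have hbound : ∀ t : ℝ, HasDerivAt
      (fun t : ℝ ↦ g x + t * ⟪gradient g x, v⟫ + K / 2 * t ^ 2 * ‖v‖ ^ 2)
      (⟪gradient g x, v⟫ + K * t * ‖v‖ ^ 2) t := fun t ↦ by
    have := (((hasDerivAt_id t).mul_const ⟪gradient g x, v⟫).const_add (g x)).add
      (((hasDerivAt_pow 2 t).const_mul ((K : ℝ) / 2)).mul_const (‖v‖ ^ 2))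
    exact this.congr_deriv (by push_cast; ring)
  have hslope : ∀ t ∈ Ico (0 : ℝ) 1,
      ⟪gradient g (x + t • v), v⟫ ≤ ⟪gradient g x, v⟫ + K * t * ‖v‖ ^ 2 := by
    intro t ht
    have hlip := hLip.norm_sub_le (hs.add_smul_sub_mem hx hy (Ico_subset_Icc_self ht)) hx
    calc ⟪gradient g (x + t • v), v⟫
        = ⟪gradient g x, v⟫ + ⟪gradient g (x + t • v) - gradient g x, v⟫ := by
          rw [inner_sub_left]; ring
      _ ≤ ⟪gradient g x, v⟫ + ‖gradient g (x + t • v) - gradient g x‖ * ‖v‖ := by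
          gcongr; exact real_inner_le_norm _ _
      _ ≤ ⟪gradient g x, v⟫ + K * ‖t • v‖ * ‖v‖ := by
          gcongr; simpa using hlip
      _ = ⟪gradient g x, v⟫ + K * t * ‖v‖ ^ 2 := by
          rw [norm_smul, Real.norm_of_nonneg ht.1]; ring
  have := image_le_of_deriv_right_le_deriv_boundary
    (fun t ht ↦ (hderiv t ht).continuousAt.continuousWithinAt)
    (fun t ht ↦ (hderiv t (Ico_subset_Icc_self ht)).hasDerivWithinAt) (by simp)
    (fun t _ ↦ (hbound t).continuousAt.continuousWithinAt)
    (fun t _ ↦ (hbound t).hasDerivWithinAt) hslope (right_mem_Icc.2 zero_le_one)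
  simpa [v] using this

theorem ConvexOn.add_le_of_isMinOn_prox {s : Set E} {F g : E → ℝ} (hF : ConvexOn ℝ s F)
    (hg : ∀ x ∈ s, DifferentiableAt ℝ g x) {K : ℝ≥0} (hLip : LipschitzOnWith K (gradient g) s)
    {ν : ℝ} (hν : 0 < ν) (hνK : ν * K ≤ 1) {ξ p ξ' : E}
    (hmin : IsMinOn (fun y ↦ F y + (2 * ν)⁻¹ * ‖ξ - y‖ ^ 2) s p) (hp : p ∈ s) (hξ' : ξ' ∈ s) :
    F p + g p ≤ F ξ' + (g ξ' - (2 * ν)⁻¹ * ‖p - ξ'‖ ^ 2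
      - ν⁻¹ * ⟪p - ξ', ξ' - ν • gradient g ξ' - ξ⟫) := by
  have hprox := hF.le_sub_inner_of_isMinOn hmin hp hξ'
  have hdesc := hF.1.le_add_inner_gradient_add_of_lipschitzOnWith hg hLip hξ' hp
  have hK : (K : ℝ) / 2 ≤ (2 * ν)⁻¹ := by
    rw [inv_eq_one_div, le_div_iff₀ (by positivity)]; linarith
  have e1 : ⟪ξ - p, ξ' - p⟫ = ‖p - ξ'‖ ^ 2 + ⟪p - ξ', ξ' - ξ⟫ := by
    rw [show ξ - p = -(p - ξ') - (ξ' - ξ) by abel, ← neg_sub p ξ', inner_sub_left,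
      inner_neg_neg, real_inner_self_eq_norm_sq, inner_neg_right, real_inner_comm]
    ring
  have e2 : ⟪p - ξ', ξ' - ν • gradient g ξ' - ξ⟫
      = ⟪p - ξ', ξ' - ξ⟫ - ν * ⟪gradient g ξ', p - ξ'⟫ := by
    rw [sub_right_comm, inner_sub_right, inner_smul_right, real_inner_comm (p - ξ')]
  have hνν : ν * ν⁻¹ = 1 := mul_inv_cancel₀ hν.ne'
  rw [e1] at hprox
  rw [e2]
  linear_combination hprox + hdesc + mul_le_mul_of_nonneg_right hK (sq_nonneg ‖p - ξ'‖)
    - ⟪gradient g ξ', p - ξ'⟫ * hνν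

end

theorem stmt_3_general (n : ℕ) (f : EuclideanSpace ℝ (Fin n) → EReal)
    (hconv : ∀ x y : EuclideanSpace ℝ (Fin n), ∀ a b : ℝ, 0 ≤ a → 0 ≤ b → a + b = 1 →
      f (a • x + b • y) ≤ (a : EReal) * f x + (b : EReal) * f y)
    (hproper_bot : ∀ x, f x ≠ ⊥)
    (g : EuclideanSpace ℝ (Fin n) → ℝ) (hg : Differentiable ℝ g)
    (lam : ℝ)
    (hLip : LipschitzOnWith (Real.toNNReal lam) (gradient g) {x | f x ≠ ⊤})
    (ν : ℝ) (hν : 0 < ν) (hνlam : ν * lam ≤ 1)  -- ν ≤ λ⁻¹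
    (prox : EuclideanSpace ℝ (Fin n) → EuclideanSpace ℝ (Fin n))
    (hprox : ∀ x y, f (prox x) + (((2 * ν)⁻¹ * ‖x - prox x‖ ^ 2 : ℝ) : EReal)
        ≤ f y + (((2 * ν)⁻¹ * ‖x - y‖ ^ 2 : ℝ) : EReal))
    (ξ ξ' : EuclideanSpace ℝ (Fin n)) (hdom : f ξ' ≠ ⊤) :
    f (prox ξ) + ((g (prox ξ) : ℝ) : EReal) ≤ f ξ' +
      (((g ξ' - (2 * ν)⁻¹ * ‖prox ξ - ξ'‖ ^ 2
        - ν⁻¹ * @inner ℝ _ _ (prox ξ - ξ') (ξ' - ν • gradient g ξ' - ξ)) : ℝ) : EReal) := by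
  set F := fun x ↦ (f x).toReal
  have hcoe : ∀ x, f x ≠ ⊤ → f x = F x := fun x hx ↦ (EReal.coe_toReal hx (hproper_bot x)).symm
  have hp : f (prox ξ) ≠ ⊤ := by
    intro htop
    have h := hprox ξ ξ'
    rw [htop, EReal.top_add_coe, top_le_iff, hcoe ξ' hdom, ← EReal.coe_add] at h
    exact EReal.coe_ne_top _ h
  have hmin : IsMinOn (fun y ↦ F y + (2 * ν)⁻¹ * ‖ξ - y‖ ^ 2) {x | f x ≠ ⊤} (prox ξ) :=
    fun y hy ↦ by
      have h := hprox ξ y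
      rwa [hcoe _ hp, hcoe y hy, ← EReal.coe_add, ← EReal.coe_add, EReal.coe_le_coe_iff] at h
  have hνK : ν * lam.toNNReal ≤ 1 := by
    rw [Real.coe_toNNReal', mul_max_of_nonneg _ _ hν.le]
    exact max_le hνlam (by simp)
  have h := (convexOn_toReal_setOf_ne_top hconv hproper_bot).add_le_of_isMinOn_prox
    (fun x _ ↦ hg x) hLip hν hνK hmin hp hdom
  rw [hcoe _ hp, hcoe _ hdom, ← EReal.coe_add, ← EReal.coe_add]
  exact_mod_cast h

/-- Prox-value inequality for composite h = f + g with Lipschitz gradient of g. -/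
theorem stmt_3 (n : ℕ) (f : EuclideanSpace ℝ (Fin n) → EReal)
    (hconv : ∀ x y : EuclideanSpace ℝ (Fin n), ∀ a b : ℝ, 0 ≤ a → 0 ≤ b → a + b = 1 →
      f (a • x + b • y) ≤ (a : EReal) * f x + (b : EReal) * f y)
    (hproper_bot : ∀ x, f x ≠ ⊥) (hproper_top : ∃ x, f x ≠ ⊤)
    (hlsc : LowerSemicontinuous f)
    (g : EuclideanSpace ℝ (Fin n) → ℝ) (hg : Differentiable ℝ g)
    (lam : ℝ) (hlam : 0 ≤ lam)
    (hLip : LipschitzOnWith (Real.toNNReal lam) (gradient g) {x | f x ≠ ⊤})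
    (ν : ℝ) (hν : 0 < ν) (hνlam : ν * lam ≤ 1)  -- ν ≤ λ⁻¹
    (prox : EuclideanSpace ℝ (Fin n) → EuclideanSpace ℝ (Fin n))
    (hprox : ∀ x y, f (prox x) + (((2 * ν)⁻¹ * ‖x - prox x‖ ^ 2 : ℝ) : EReal)
        ≤ f y + (((2 * ν)⁻¹ * ‖x - y‖ ^ 2 : ℝ) : EReal))
    (ξ ξ' : EuclideanSpace ℝ (Fin n)) (hdom : f ξ' ≠ ⊤) :
    f (prox ξ) + ((g (prox ξ) : ℝ) : EReal) ≤ f ξ' +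
      (((g ξ' - (2 * ν)⁻¹ * ‖prox ξ - ξ'‖ ^ 2
        - ν⁻¹ * @inner ℝ _ _ (prox ξ - ξ') (ξ' - ν • gradient g ξ' - ξ)) : ℝ) : EReal) :=
  stmt_3_general n f hconv hproper_bot g hg lam hLip ν hν hνlam prox hprox ξ ξ' hdom
end

section
/- Let J : ℝ^M × ℝˡ → ℝ be C¹, and suppose for each p the function u ↦ J(u,p) + U(u) (with U proper convex lsc) has unique minimizer ū(p), and that p ↦ J̄(p) := min_u J(u,p) + U(u) is differentiable. If ū is continuous at p₀, then ∇_p J̄(p₀) = ∇_p J(ū(p₀), p₀) (partial derivative of J with respect to p evaluated at the optimal u). -/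
/-!
Fix `u₀ = ubar p₀`. Since `u₀` is admissible for every parameter, the optimal value satisfies
`Jbar p ≤ J u₀ p + U u₀` for all `p`, with equality at `p₀` (so `U u₀` is finite). Thus `Jbar`
touches the differentiable function `p ↦ J u₀ p + U u₀` from below at `p₀`, and two
functions touching at a point have the same derivative there.
-/

open Filter Topology

theorem HasFDerivAt.eq_of_eventuallyLE_of_eq {E : Type*} [NormedAddCommGroup E]
    [NormedSpace ℝ E] {f g : E → ℝ} {f' g' : E →L[ℝ] ℝ} {x : E}
    (hf : HasFDerivAt f f' x) (hg : HasFDerivAt g g' x) (hle : f ≤ᶠ[𝓝 x] g)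
    (heq : f x = g x) : f' = g' := by
  have hmin : IsLocalMin (g - f) x := by
    filter_upwards [hle] with y hy
    simp only [Pi.sub_apply, heq, sub_self, sub_nonneg, hy]
  exact (sub_eq_zero.mp (hmin.hasFDerivAt_eq_zero (hg.sub hf))).symm

theorem EReal.eq_coe_sub_of_coe_eq_coe_add {a b : ℝ} {x : EReal}
    (h : (a : EReal) = b + x) : x = ((a - b : ℝ) : EReal) := by
  induction x using EReal.rec with
  | bot => simp at h
  | top => simp at h
  | coe x =>
    rw [← EReal.coe_add, EReal.coe_eq_coe_iff] at h
    rw [EReal.coe_eq_coe_iff]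
    linarith

theorem value_le_add_sub_of_isMinimizer {α P : Type*} {φ : α → P → ℝ} {V : α → EReal}
    {ubar : P → α} {val : P → ℝ}
    (hmin : ∀ p y, (φ (ubar p) p : EReal) + V (ubar p) ≤ (φ y p : EReal) + V y)
    (hval : ∀ p, (val p : EReal) = (φ (ubar p) p : EReal) + V (ubar p)) (p p₀ : P) :
    val p ≤ φ (ubar p₀) p + (val p₀ - φ (ubar p₀) p₀) := by
  have h := hmin p (ubar p₀)
  rw [← hval p, EReal.eq_coe_sub_of_coe_eq_coe_add (hval p₀), ← EReal.coe_add] at h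
  exact_mod_cast h

theorem stmt_13_general (M l : ℕ)
    (J : EuclideanSpace ℝ (Fin M) → EuclideanSpace ℝ (Fin l) → ℝ)
    (hJ : ContDiff ℝ 1 (fun up : EuclideanSpace ℝ (Fin M) × EuclideanSpace ℝ (Fin l) =>
      J up.1 up.2))
    (U : EuclideanSpace ℝ (Fin M) → EReal)
    (ubar : EuclideanSpace ℝ (Fin l) → EuclideanSpace ℝ (Fin M))
    (hmin : ∀ p y, (J (ubar p) p : EReal) + U (ubar p) ≤ (J y p : EReal) + U y)
    (Jbar : EuclideanSpace ℝ (Fin l) → ℝ)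
    (hJbar : ∀ p, ((Jbar p : ℝ) : EReal) = (J (ubar p) p : EReal) + U (ubar p))
    (p₀ : EuclideanSpace ℝ (Fin l))
    (hdiff : DifferentiableAt ℝ Jbar p₀) :
    gradient Jbar p₀ = gradient (fun p => J (ubar p₀) p) p₀ := by
  set u₀ := ubar p₀
  set c := Jbar p₀ - J u₀ p₀
  have hpartial : Differentiable ℝ (fun p => J u₀ p) :=
    (hJ.differentiable one_ne_zero).comp ((differentiable_const u₀).prodMk differentiable_id)
  have hfderiv : fderiv ℝ Jbar p₀ = fderiv ℝ (fun p => J u₀ p) p₀ :=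
    hdiff.hasFDerivAt.eq_of_eventuallyLE_of_eq ((hpartial p₀).hasFDerivAt.add_const c)
      (Eventually.of_forall (value_le_add_sub_of_isMinimizer hmin hJbar · p₀)) (by simp [c])
  simp only [gradient, hfderiv]

/-- Danskin/envelope theorem: the gradient of the optimal value function equals the
partial gradient of the cost at the optimizer. -/
theorem stmt_13 (M l : ℕ)
    (J : EuclideanSpace ℝ (Fin M) → EuclideanSpace ℝ (Fin l) → ℝ)
    (hJ : ContDiff ℝ 1 (fun up : EuclideanSpace ℝ (Fin M) × EuclideanSpace ℝ (Fin l) =>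
      J up.1 up.2))
    (U : EuclideanSpace ℝ (Fin M) → EReal)
    (hUconv : ∀ x y : EuclideanSpace ℝ (Fin M), ∀ a b : ℝ, 0 ≤ a → 0 ≤ b → a + b = 1 →
      U (a • x + b • y) ≤ (a : EReal) * U x + (b : EReal) * U y)
    (hUbot : ∀ x, U x ≠ ⊥) (hUtop : ∃ x, U x ≠ ⊤)
    (hUlsc : LowerSemicontinuous U)
    (ubar : EuclideanSpace ℝ (Fin l) → EuclideanSpace ℝ (Fin M))
    (hmin : ∀ p y, (J (ubar p) p : EReal) + U (ubar p) ≤ (J y p : EReal) + U y)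
    (huniq : ∀ p u, (∀ y, (J u p : EReal) + U u ≤ (J y p : EReal) + U y) → u = ubar p)
    (Jbar : EuclideanSpace ℝ (Fin l) → ℝ)
    (hJbar : ∀ p, ((Jbar p : ℝ) : EReal) = (J (ubar p) p : EReal) + U (ubar p))
    (p₀ : EuclideanSpace ℝ (Fin l))
    (hdiff : DifferentiableAt ℝ Jbar p₀) (hcont : ContinuousAt ubar p₀) :
    gradient Jbar p₀ = gradient (fun p => J (ubar p₀) p) p₀ :=
  stmt_13_general M l J hJ U ubar hmin Jbar hJbar p₀ hdiff
end

section
/- Let {a_ℓ}, {b_ℓ}, {c_ℓ} be nonnegative sequences satisfying the coupled inequalities a_{ℓ+1} ≤ max{α_a a_ℓ, γ_{ab} b_ℓ}, b_{ℓ+1} ≤ max{α_b b_ℓ, γ_{bc} c_ℓ}, c_{ℓ+1} ≤ max{ϱ c_ℓ, γ_{ca} a_ℓ, γ_{cb} b_ℓ}, where α_a, α_b, ϱ ∈ (0,1) and the gains satisfy the cyclic small-gain conditions γ_{cb}·γ_{bc} < 1 and γ_{ca}·γ_{ab}·γ_{bc} < 1. Then a_ℓ → 0, b_ℓ → 0,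 and c_ℓ → 0 as ℓ → ∞. -/
set_option maxHeartbeats 1000000 in
/-- Scalar three-system discrete-time small-gain theorem. -/
theorem stmt_19 (a b c : ℕ → ℝ)
    (ha : ∀ ℓ, 0 ≤ a ℓ) (hb : ∀ ℓ, 0 ≤ b ℓ) (hc : ∀ ℓ, 0 ≤ c ℓ)
    (αa αb ϱ : ℝ) (hαa : αa ∈ Set.Ioo (0 : ℝ) 1) (hαb : αb ∈ Set.Ioo (0 : ℝ) 1)
    (hϱ : ϱ ∈ Set.Ioo (0 : ℝ) 1)
    (γab γbc γca γcb : ℝ)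
    (hγab : 0 ≤ γab) (hγbc : 0 ≤ γbc) (hγca : 0 ≤ γca) (hγcb : 0 ≤ γcb)
    (hrec_a : ∀ ℓ, a (ℓ + 1) ≤ max (αa * a ℓ) (γab * b ℓ))
    (hrec_b : ∀ ℓ, b (ℓ + 1) ≤ max (αb * b ℓ) (γbc * c ℓ))
    (hrec_c : ∀ ℓ, c (ℓ + 1) ≤ max (ϱ * c ℓ) (max (γca * a ℓ) (γcb * b ℓ)))
    (hsg₁ : γcb * γbc < 1) (hsg₂ : γca * γab * γbc < 1) :
    Filter.Tendsto a Filter.atTop (nhds 0) ∧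
    Filter.Tendsto b Filter.atTop (nhds 0) ∧
    Filter.Tendsto c Filter.atTop (nhds 0) := by
  obtain ⟨hαa0, hαa1⟩ := hαa
  obtain ⟨hαb0, hαb1⟩ := hαb
  obtain ⟨hϱ0, hϱ1⟩ := hϱ
  -- perturb gains to be strictly positive while keeping small-gain conditions
  have hFcont : ContinuousAt
      (fun ε : ℝ => max ((γcb + ε) * (γbc + ε)) ((γca + ε) * ((γab + ε) * (γbc + ε)))) 0 := by
    fun_prop
  have hF0 : (fun ε : ℝ => max ((γcb + ε) * (γbc + ε)) ((γca + ε) * ((γab + ε) * (γbc + ε)))) 0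
      < 1 := by
    simp only [add_zero]
    exact max_lt hsg₁ (by linarith [hsg₂] ; )
  have hev : ∀ᶠ ε in nhds (0 : ℝ),
      max ((γcb + ε) * (γbc + ε)) ((γca + ε) * ((γab + ε) * (γbc + ε))) < 1 :=
    hFcont.eventually_lt continuousAt_const hF0
  obtain ⟨δ, hδ0, hδ⟩ := Metric.eventually_nhds_iff.mp hev
  set ε := δ / 2 with hεdef
  have hε0 : 0 < ε := by positivity
  have hεδ : dist ε (0 : ℝ) < δ := by
    rw [Real.dist_eq, sub_zero, abs_of_pos hε0]
    linarith
  have hmax := hδ hεδ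
  set gab := γab + ε with hgab
  set gbc := γbc + ε with hgbc
  set gca := γca + ε with hgca
  set gcb := γcb + ε with hgcb
  have hgab0 : 0 < gab := by positivity
  have hgbc0 : 0 < gbc := by positivity
  have hgca0 : 0 < gca := by positivity
  have hgcb0 : 0 < gcb := by positivity
  have hsg1' : gcb * gbc < 1 := lt_of_le_of_lt (le_max_left _ _) hmax
  have hsg2' : gca * (gab * gbc) < 1 := lt_of_le_of_lt (le_max_right _ _) hmax
  clear_value ε gab gbc gca gcb
  -- construct weights
  set q : ℝ := (max gcb (gca * gab) + 1 / gbc) / 2 with hqdef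
  have h1 : gcb < 1 / gbc := by rw [lt_div_iff₀ hgbc0]; exact hsg1'
  have h2 : gca * gab < 1 / gbc := by
    rw [lt_div_iff₀ hgbc0, mul_assoc]; exact hsg2'
  have hmlt : max gcb (gca * gab) < 1 / gbc := max_lt h1 h2
  have hq_cb : gcb < q := by
    have := le_max_left gcb (gca * gab)
    rw [hqdef]; linarith
  have hq_ca : gca * gab < q := by
    have h4 := le_max_right gcb (gca * gab)
    rw [hqdef]; linarith [h2]
  have hq_bc : q * gbc < 1 := by
    have hq_lt : q < 1 / gbc := by rw [hqdef]; linarith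
    calc q * gbc < (1 / gbc) * gbc := by
          exact mul_lt_mul_of_pos_right hq_lt hgbc0
    _ = 1 := by field_simp
  have hq0 : 0 < q := lt_trans hgcb0 hq_cb
  set p : ℝ := (gca + q / gab) / 2 with hpdef
  have h3 : gca < q / gab := by
    rw [lt_div_iff₀ hgab0]; exact hq_ca
  have hp_ca : gca < p := by rw [hpdef]; linarith
  have hp_ab : p * gab < q := by
    have hp_lt : p < q / gab := by rw [hpdef]; linarith
    calc p * gab < (q / gab) * gab := mul_lt_mul_of_pos_right hp_lt hgab0
    _ = q := by field_simp
  have hp0 : 0 < p := lt_trans hgca0 hp_ca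
  -- the contraction factor
  set lam : ℝ := max (max αa (max αb ϱ))
      (max (p * gab / q) (max (q * gbc) (max (gca / p) (gcb / q)))) with hlamdef
  have hlam0 : 0 < lam := lt_of_lt_of_le hαa0
    (le_trans (le_max_left _ _) (le_max_left _ _))
  have hlam1 : lam < 1 := by
    apply max_lt (max_lt hαa1 (max_lt hαb1 hϱ1))
    apply max_lt
    · rw [div_lt_one hq0]; exact hp_ab
    apply max_lt hq_bc
    apply max_lt
    · rw [div_lt_one hp0]; exact hp_ca
    · rw [div_lt_one hq0]; exact hq_cb
  -- key bounded gain facts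
  have hαa_lam : αa ≤ lam := le_trans (le_max_left _ _) (le_max_left _ _)
  have hαb_lam : αb ≤ lam :=
    le_trans (le_trans (le_max_left _ _) (le_max_right _ _)) (le_max_left _ _)
  have hϱ_lam : ϱ ≤ lam :=
    le_trans (le_trans (le_max_right _ _) (le_max_right _ _)) (le_max_left _ _)
  have hpab_lam : p * γab ≤ lam * q := by
    have h1 : p * gab / q ≤ lam := le_trans (le_max_left _ _) (le_max_right _ _)
    have h2 : p * gab ≤ lam * q := (div_le_iff₀ hq0).mp h1
    have : p * γab ≤ p * gab := by
      have : γab ≤ gab := by rw [hgab]; linarith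
      nlinarith
    linarith
  have hqbc_lam : q * γbc ≤ lam := by
    have h1 : q * gbc ≤ lam :=
      le_trans (le_trans (le_max_left _ _) (le_max_right _ _)) (le_max_right _ _)
    have : q * γbc ≤ q * gbc := by
      have : γbc ≤ gbc := by rw [hgbc]; linarith
      nlinarith
    linarith
  have hca_lam : γca ≤ lam * p := by
    have h1 : gca / p ≤ lam :=
      le_trans (le_trans (le_max_left _ _) (le_max_right _ _))
        (le_trans (le_max_right _ _) (le_max_right _ _))
    have h2 : gca ≤ lam * p := (div_le_iff₀ hp0).mp h1
    have : γca ≤ gca := by rw [hgca]; linarith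
    linarith
  have hcb_lam : γcb ≤ lam * q := by
    have h1 : gcb / q ≤ lam :=
      le_trans (le_trans (le_max_right _ _) (le_max_right _ _))
        (le_trans (le_max_right _ _) (le_max_right _ _))
    have h2 : gcb ≤ lam * q := (div_le_iff₀ hq0).mp h1
    have : γcb ≤ gcb := by rw [hgcb]; linarith
    linarith
  -- the Lyapunov function
  set V : ℕ → ℝ := fun ℓ => max (p * a ℓ) (max (q * b ℓ) (c ℓ)) with hVdef
  have hV0 : ∀ ℓ, 0 ≤ V ℓ := fun ℓ =>
    le_trans (hc ℓ) (le_trans (le_max_right _ _) (le_max_right _ _))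
  have haV : ∀ ℓ, p * a ℓ ≤ V ℓ := fun ℓ => le_max_left _ _
  have hbV : ∀ ℓ, q * b ℓ ≤ V ℓ := fun ℓ =>
    le_trans (le_max_left _ _) (le_max_right _ _)
  have hcV : ∀ ℓ, c ℓ ≤ V ℓ := fun ℓ =>
    le_trans (le_max_right _ _) (le_max_right _ _)
  have hstep : ∀ ℓ, V (ℓ + 1) ≤ lam * V ℓ := by
    intro ℓ
    apply max_le
    · -- p * a (ℓ+1)
      have h := mul_le_mul_of_nonneg_left (hrec_a ℓ) hp0.le
      refine le_trans h ?_
      rw [mul_max_of_nonneg _ _ hp0.le]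
      apply max_le
      · calc p * (αa * a ℓ) = αa * (p * a ℓ) := by ring
        _ ≤ lam * V ℓ := mul_le_mul hαa_lam (haV ℓ)
            (mul_nonneg hp0.le (ha ℓ)) hlam0.le
      · calc p * (γab * b ℓ) = (p * γab) * b ℓ := by ring
        _ ≤ (lam * q) * b ℓ := mul_le_mul_of_nonneg_right hpab_lam (hb ℓ)
        _ = lam * (q * b ℓ) := by ring
        _ ≤ lam * V ℓ := mul_le_mul_of_nonneg_left (hbV ℓ) hlam0.le
    apply max_le
    · -- q * b (ℓ+1)
      have h := mul_le_mul_of_nonneg_left (hrec_b ℓ) hq0.le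
      refine le_trans h ?_
      rw [mul_max_of_nonneg _ _ hq0.le]
      apply max_le
      · calc q * (αb * b ℓ) = αb * (q * b ℓ) := by ring
        _ ≤ lam * V ℓ := mul_le_mul hαb_lam (hbV ℓ)
            (mul_nonneg hq0.le (hb ℓ)) hlam0.le
      · calc q * (γbc * c ℓ) = (q * γbc) * c ℓ := by ring
        _ ≤ lam * V ℓ := mul_le_mul hqbc_lam (hcV ℓ) (hc ℓ) hlam0.le
    · -- c (ℓ+1)
      refine le_trans (hrec_c ℓ) ?_
      apply max_le
      · exact mul_le_mul hϱ_lam (hcV ℓ) (hc ℓ) hlam0.le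
      apply max_le
      · calc γca * a ℓ ≤ (lam * p) * a ℓ := mul_le_mul_of_nonneg_right hca_lam (ha ℓ)
        _ = lam * (p * a ℓ) := by ring
        _ ≤ lam * V ℓ := mul_le_mul_of_nonneg_left (haV ℓ) hlam0.le
      · calc γcb * b ℓ ≤ (lam * q) * b ℓ := mul_le_mul_of_nonneg_right hcb_lam (hb ℓ)
        _ = lam * (q * b ℓ) := by ring
        _ ≤ lam * V ℓ := mul_le_mul_of_nonneg_left (hbV ℓ) hlam0.le
  have hgeom : ∀ ℓ, V ℓ ≤ lam ^ ℓ * V 0 := by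
    intro ℓ
    induction ℓ with
    | zero => simp
    | succ n ih =>
      calc V (n + 1) ≤ lam * V n := hstep n
      _ ≤ lam * (lam ^ n * V 0) := mul_le_mul_of_nonneg_left ih hlam0.le
      _ = lam ^ (n + 1) * V 0 := by ring
  have htend : Filter.Tendsto (fun ℓ => lam ^ ℓ * V 0) Filter.atTop (nhds 0) := by
    have h := tendsto_pow_atTop_nhds_zero_of_lt_one hlam0.le hlam1
    simpa using h.mul_const (V 0)
  refine ⟨?_, ?_, ?_⟩
  · apply squeeze_zero ha (fun ℓ => ?_) (by simpa using htend.div_const p)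
    rw [le_div_iff₀ hp0]
    calc a ℓ * p = p * a ℓ := by ring
    _ ≤ V ℓ := haV ℓ
    _ ≤ lam ^ ℓ * V 0 := hgeom ℓ
  · apply squeeze_zero hb (fun ℓ => ?_) (by simpa using htend.div_const q)
    rw [le_div_iff₀ hq0]
    calc b ℓ * q = q * b ℓ := by ring
    _ ≤ V ℓ := hbV ℓ
    _ ≤ lam ^ ℓ * V 0 := hgeom ℓ
  · exact squeeze_zero hc (fun ℓ => le_trans (hcV ℓ) (hgeom ℓ)) htend
end
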